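/- Linear growth of the position spread: let (x_i, v_i), i = 1, …, n, be a smooth solution of the controlled Cucker-Smale system on [0, T] with finite initial energy E₀ := (1/(4n))∑_{i,j=1}^n |v_i(0) − v_j(0)|² + E₂(x(0)). Then Γ(x(t)) ≤ Γ(x(0)) + 2√(n E₀) · t for all 0 ≤ t ≤ T, where Γ(x) := √(∑_{i,j=1}^n |x_i − x_j|²). -/

import Mathlib

/-! The energy `E = (1/(4n)) ∑ᵢⱼ |vᵢ - vⱼ|² + E₂(x)` is nonincreasing along solutions, with
`E' = -D ≤ 0`: the alignment force is antisymmetric in `(i, j)`, and the control is a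
telescoping difference `wᵢ - wᵢ₊₁` of the link forces, equal to `-∇E₂/M`; so the total force
vanishes and the power of the control cancels `dE₂/dt`. Since `E₂ ≥ 0`, this gives
`∑ᵢⱼ |vᵢ - vⱼ|² ≤ 4nE₀` at all times, i.e. the vector of pairwise differences `(xᵢ - xⱼ)ᵢⱼ`,
whose Euclidean norm is `Γ`, moves with speed at most `2√(nE₀)`; the mean value inequality
concludes. -/

open scoped BigOperators
open Filter MeasureTheory

noncomputable section

/-- Singular communication weight ψ(r) = r^{-α}. -/
def psiCS (α r : ℝ) : ℝ := r ^ (-α)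

/-- Regular communication weight φ(r) = (1+r)^{-β}. -/
def phiCS (β r : ℝ) : ℝ := (1 + r) ^ (-β)

/-- The decentralized control u_i (agents indexed 1,…,n): for 2 ≤ i ≤ n-1,
`u_i = φ(|x_{i-1}-x_i-z_{i-1}|²)(x_{i-1}-x_i-z_{i-1}) - φ(|x_i-x_{i+1}-z_i|²)(x_i-x_{i+1}-z_i)`,
with only the second term for i = 1 and only the first term for i = n. -/
def uCS {E : Type*} [NormedAddCommGroup E] [NormedSpace ℝ E]
    (n : ℕ) (φ : ℝ → ℝ) (z x : ℕ → E) (i : ℕ) : E :=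
  (if 2 ≤ i then φ (‖x (i-1) - x i - z (i-1)‖ ^ 2) • (x (i-1) - x i - z (i-1)) else 0)
    - (if i + 1 ≤ n then φ (‖x i - x (i+1) - z i‖ ^ 2) • (x i - x (i+1) - z i) else 0)

/-- (x, v) is a solution of the controlled Cucker–Smale system
`x_i' = v_i`, `v_i' = (K/n) ∑_{j≠i} ψ(r_{ij})(v_j - v_i) + M u_i` on the time set S. -/
def IsCSSol {E : Type*} [NormedAddCommGroup E] [NormedSpace ℝ E]
    (n : ℕ) (K M α β : ℝ) (z : ℕ → E) (x v : ℕ → ℝ → E) (S : Set ℝ) : Prop :=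
  ∀ i ∈ Finset.Icc 1 n, ∀ t ∈ S,
    HasDerivWithinAt (x i) (v i t) S t ∧
    HasDerivWithinAt (v i)
      ((K / n) • ∑ j ∈ (Finset.Icc 1 n).erase i,
          psiCS α ‖x j t - x i t‖ • (v j t - v i t)
        + M • uCS n (phiCS β) z (fun k => x k t) i) S t

/-- Potential energy E₂(x) = (M/2) ∑_{i=2}^n ∫₀^{|x_{i-1}-x_i-z_{i-1}|²} φ(r) dr. -/
def E2CS {E : Type*} [NormedAddCommGroup E] [NormedSpace ℝ E]
    (n : ℕ) (M β : ℝ) (z x : ℕ → E) : ℝ :=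
  (M / 2) * ∑ i ∈ Finset.Icc 2 n, ∫ r in (0:ℝ)..(‖x (i-1) - x i - z (i-1)‖ ^ 2), phiCS β r

/-- Kinetic energy E₁(v) = (1/2) ∑ᵢ |vᵢ|². -/
def E1CS {E : Type*} [NormedAddCommGroup E] [NormedSpace ℝ E]
    (n : ℕ) (v : ℕ → E) : ℝ :=
  (1 / 2) * ∑ i ∈ Finset.Icc 1 n, ‖v i‖ ^ 2

/-- Dissipation D(x,v) = (K/(2n)) ∑_{i≠j} ψ(r_{ij}) |v_i - v_j|². -/
def DCS {E : Type*} [NormedAddCommGroup E] [NormedSpace ℝ E]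
    (n : ℕ) (K α : ℝ) (x v : ℕ → E) : ℝ :=
  (K / (2 * n)) * ∑ i ∈ Finset.Icc 1 n, ∑ j ∈ (Finset.Icc 1 n).erase i,
    psiCS α ‖x j - x i‖ * ‖v i - v j‖ ^ 2

/-- Velocity fluctuation (1/(4n)) ∑_{i,j} |v_i - v_j|². -/
def VflCS {E : Type*} [NormedAddCommGroup E] [NormedSpace ℝ E]
    (n : ℕ) (v : ℕ → E) : ℝ :=
  (1 / (4 * n)) * ∑ i ∈ Finset.Icc 1 n, ∑ j ∈ Finset.Icc 1 n, ‖v i - v j‖ ^ 2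

open scoped RealInnerProductSpace
open Finset

section FiniteSums

variable {F : Type*} [NormedAddCommGroup F] [InnerProductSpace ℝ F]

theorem sum_Icc_one_ite_two_le {G : Type*} [AddCommMonoid G] (n : ℕ) (f : ℕ → G) :
    ∑ i ∈ Icc 1 n, (if 2 ≤ i then f i else 0) = ∑ i ∈ Icc 2 n, f i := by
  rw [← sum_filter]
  congr 1
  ext i
  simp only [mem_filter, mem_Icc]
  omega

theorem sum_Icc_one_ite_succ_le {G : Type*} [AddCommMonoid G] (n : ℕ) (f : ℕ → ℕ → G) :
    ∑ i ∈ Icc 1 n, (if i + 1 ≤ n then f (i + 1) i else 0) = ∑ i ∈ Icc 2 n, f i (i - 1) := by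
  rw [← sum_filter]
  refine sum_nbij' (· + 1) (· - 1) ?_ ?_ ?_ ?_ ?_
  iterate 4 intro i hi; simp only [mem_filter, mem_Icc] at hi ⊢; omega
  intro i _
  rw [add_tsub_cancel_right]

theorem sum_sum_eq_zero_of_antisymm {ι G : Type*} [AddCommGroup G] [Module ℝ G]
    (s : Finset ι) (f : ι → ι → G) (hf : ∀ i j, f j i = -f i j) :
    ∑ i ∈ s, ∑ j ∈ s, f i j = 0 := by
  have hneg : ∑ i ∈ s, ∑ j ∈ s, f i j = -∑ i ∈ s, ∑ j ∈ s, f i j := by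
    conv_lhs => rw [sum_comm]
    rw [← sum_neg_distrib]
    refine sum_congr rfl fun i _ => ?_
    rw [← sum_neg_distrib]
    exact sum_congr rfl fun j _ => hf i j
  have htwo : (2 : ℝ) • ∑ i ∈ s, ∑ j ∈ s, f i j = 0 := by
    rw [two_smul]
    nth_rw 1 [hneg]
    exact neg_add_cancel _
  exact (smul_eq_zero.1 htwo).resolve_left two_ne_zero

theorem sum_sum_inner_sub_sub_of_sum_eq_zero {ι : Type*} (s : Finset ι) (V a : ι → F)
    (ha : ∑ i ∈ s, a i = 0) :
    ∑ i ∈ s, ∑ j ∈ s, ⟪V i - V j, a i - a j⟫ = 2 * #s * ∑ i ∈ s, ⟪V i, a i⟫ := by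
  simp only [inner_sub_left, inner_sub_right, sum_sub_distrib, sum_const, nsmul_eq_mul,
    ← inner_sum, ← sum_inner, ha, inner_zero_right, ← mul_sum]
  ring

theorem sum_sum_mul_inner_sub_eq {ι : Type*} (s : Finset ι) (w : ι → ι → ℝ)
    (hw : ∀ i j, w j i = w i j) (V : ι → F) :
    ∑ i ∈ s, ∑ j ∈ s, w i j * ⟪V i, V j - V i⟫
      = -(1 / 2) * ∑ i ∈ s, ∑ j ∈ s, w i j * ‖V i - V j‖ ^ 2 := by
  have hsq : ∀ i j, ‖V i - V j‖ ^ 2 = -⟪V i, V j - V i⟫ - ⟪V j, V i - V j⟫ := by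
    intro i j
    rw [← real_inner_self_eq_norm_sq]
    simp only [inner_sub_left, inner_sub_right, real_inner_comm (V i) (V j)]
    ring
  have hswap : ∑ i ∈ s, ∑ j ∈ s, w i j * ⟪V j, V i - V j⟫
      = ∑ i ∈ s, ∑ j ∈ s, w i j * ⟪V i, V j - V i⟫ := by
    rw [sum_comm]
    simp only [hw]
  simp only [hsq, mul_sub, mul_neg, sum_sub_distrib, sum_neg_distrib, hswap]
  ring

end FiniteSums

theorem sqrt_sum_norm_sq_le_add_mul {ι E : Type*} [NormedAddCommGroup E] [NormedSpace ℝ E]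
    (s : Finset ι) {f f' : ι → ℝ → E} {a b C : ℝ}
    (hf : ∀ i ∈ s, ∀ u ∈ Set.Icc a b, HasDerivWithinAt (f i) (f' i u) (Set.Icc a b) u)
    (hC : ∀ u ∈ Set.Ico a b, √(∑ i ∈ s, ‖f' i u‖ ^ 2) ≤ C) :
    ∀ t ∈ Set.Icc a b, √(∑ i ∈ s, ‖f i t‖ ^ 2) ≤ √(∑ i ∈ s, ‖f i a‖ ^ 2) + C * (t - a) := by
  let L := (PiLp.continuousLinearEquiv 2 ℝ fun _ : s => E).symm
  have hnorm : ∀ g : ι → E, ‖L fun i => g i‖ = √(∑ i ∈ s, ‖g i‖ ^ 2) := fun g => by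
    rw [PiLp.norm_eq_of_L2, ← sum_coe_sort s]
    simp [L]
  have hderiv : ∀ u ∈ Set.Icc a b, HasDerivWithinAt (fun u => L fun i : s => f i u)
      (L fun i : s => f' i u) (Set.Icc a b) u := fun u hu =>
    L.hasFDerivAt.comp_hasDerivWithinAt u (hasDerivWithinAt_pi.2 fun i => hf i i.2 u hu)
  intro t ht
  have hmvt := norm_image_sub_le_of_norm_deriv_le_segment' hderiv
    (fun u hu => (hnorm (f' · u)).trans_le (hC u hu)) t ht
  rw [← hnorm, ← hnorm]
  exact (norm_le_norm_add_norm_sub' _ _).trans (by gcongr)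

section ControlledCuckerSmale

variable {F : Type*} [NormedAddCommGroup F] [InnerProductSpace ℝ F]
variable (n : ℕ) (K M α β : ℝ) (z X V : ℕ → F)

def csAccel (i : ℕ) : F :=
  (K / n) • ∑ j ∈ (Icc 1 n).erase i, psiCS α ‖X j - X i‖ • (V j - V i)
    + M • uCS n (phiCS β) z X i

def csEnergy : ℝ := VflCS n V + E2CS n M β z X

theorem sum_uCS_eq_zero (φ : ℝ → ℝ) : ∑ i ∈ Icc 1 n, uCS n φ z X i = 0 := by
  have hshift := sum_Icc_one_ite_succ_le n
    (fun k j => φ (‖X j - X k - z j‖ ^ 2) • (X j - X k - z j))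
  simp only [uCS]
  rw [sum_sub_distrib, sum_Icc_one_ite_two_le, hshift, sub_self]

theorem sum_inner_uCS (φ : ℝ → ℝ) :
    ∑ i ∈ Icc 1 n, ⟪V i, uCS n φ z X i⟫
      = -∑ i ∈ Icc 2 n, φ (‖X (i - 1) - X i - z (i - 1)‖ ^ 2)
          * ⟪X (i - 1) - X i - z (i - 1), V (i - 1) - V i⟫ := by
  have hshift := sum_Icc_one_ite_succ_le n
    (fun k j => ⟪V j, φ (‖X j - X k - z j‖ ^ 2) • (X j - X k - z j)⟫)
  simp only [uCS, inner_sub_right, apply_ite (inner ℝ (V _)), inner_zero_right]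
  rw [sum_sub_distrib, sum_Icc_one_ite_two_le, hshift, ← sum_sub_distrib, ← sum_neg_distrib]
  refine sum_congr rfl fun i _ => ?_
  simp only [real_inner_smul_right, inner_sub_right, real_inner_comm (V _)]
  ring

theorem sum_csAccel_eq_zero : ∑ i ∈ Icc 1 n, csAccel n K M α β z X V i = 0 := by
  simp only [csAccel, sum_add_distrib, ← smul_sum, sum_uCS_eq_zero, smul_zero, add_zero]
  have hfull : ∀ i, ∑ j ∈ (Icc 1 n).erase i, psiCS α ‖X j - X i‖ • (V j - V i)
      = ∑ j ∈ Icc 1 n, psiCS α ‖X j - X i‖ • (V j - V i) :=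
    fun i => sum_erase _ (by simp)
  rw [sum_congr rfl fun i _ => hfull i, sum_sum_eq_zero_of_antisymm, smul_zero]
  intro i j
  rw [norm_sub_rev, ← smul_neg, neg_sub]

theorem sum_inner_csAccel :
    ∑ i ∈ Icc 1 n, ⟪V i, csAccel n K M α β z X V i⟫
      = -DCS n K α X V - M * ∑ i ∈ Icc 2 n, phiCS β (‖X (i - 1) - X i - z (i - 1)‖ ^ 2)
          * ⟪X (i - 1) - X i - z (i - 1), V (i - 1) - V i⟫ := by
  have hdiss := sum_sum_mul_inner_sub_eq (Icc 1 n) (fun i j => psiCS α ‖X j - X i‖)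
    (fun i j => by rw [norm_sub_rev]) V
  have hfull : ∀ i, ∑ j ∈ (Icc 1 n).erase i, psiCS α ‖X j - X i‖ * ‖V i - V j‖ ^ 2
      = ∑ j ∈ Icc 1 n, psiCS α ‖X j - X i‖ * ‖V i - V j‖ ^ 2 :=
    fun i => sum_erase _ (by simp)
  simp only [csAccel, inner_add_right, real_inner_smul_right, sum_add_distrib, ← mul_sum,
    sum_inner_uCS, inner_sum, DCS, hfull]
  rw [sum_congr rfl fun i _ => sum_erase _ (by simp), hdiss]
  ring

theorem DCS_nonneg (hK : 0 ≤ K) : 0 ≤ DCS n K α X V := by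
  unfold DCS psiCS
  positivity

theorem E2CS_nonneg (hM : 0 ≤ M) : 0 ≤ E2CS n M β z X :=
  mul_nonneg (by positivity) (sum_nonneg fun _ _ => intervalIntegral.integral_nonneg
    (sq_nonneg _) fun r hr => Real.rpow_nonneg (by linarith [hr.1]) _)

theorem sum_sum_norm_sub_sq_eq_four_mul_VflCS :
    ∑ i ∈ Icc 1 n, ∑ j ∈ Icc 1 n, ‖V i - V j‖ ^ 2 = 4 * n * VflCS n V := by
  rcases n.eq_zero_or_pos with rfl | hn
  · simp
  unfold VflCS
  field_simp

-- The left-hand side is the time derivative of `csEnergy` along the flow, as the chain rule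
-- produces it.
theorem csEnergy_rate_eq_neg_DCS :
    1 / (4 * n) * ∑ i ∈ Icc 1 n, ∑ j ∈ Icc 1 n,
        2 * ⟪V i - V j, csAccel n K M α β z X V i - csAccel n K M α β z X V j⟫
      + M / 2 * ∑ i ∈ Icc 2 n, phiCS β (‖X (i - 1) - X i - z (i - 1)‖ ^ 2)
          * (2 * ⟪X (i - 1) - X i - z (i - 1), V (i - 1) - V i⟫)
      = -DCS n K α X V := by
  rcases n.eq_zero_or_pos with rfl | hn
  · simp [DCS]
  simp only [mul_left_comm _ (2 : ℝ), ← mul_sum, Nat.card_Icc, Nat.add_sub_cancel,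
    sum_sum_inner_sub_sub_of_sum_eq_zero _ _ _ (sum_csAccel_eq_zero ..), sum_inner_csAccel]
  field_simp
  ring

theorem continuousOn_phiCS : ContinuousOn (phiCS β) (Set.Ioi (-1)) :=
  (continuousOn_const.add continuousOn_id).rpow_const fun r hr =>
    Or.inl (by linarith [Set.mem_Ioi.1 hr] : (0 : ℝ) < 1 + r).ne'

theorem hasDerivAt_integral_phiCS {y : ℝ} (hy : -1 < y) :
    HasDerivAt (fun s => ∫ r in (0 : ℝ)..s, phiCS β r) (phiCS β y) y := by
  have hsub : Set.uIcc 0 y ⊆ Set.Ioi (-1) := fun r hr => by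
    simp only [Set.mem_uIcc] at hr
    simp only [Set.mem_Ioi]
    rcases hr with h | h <;> linarith [h.1]
  exact intervalIntegral.integral_hasDerivAt_right
    ((continuousOn_phiCS β).mono hsub).intervalIntegrable
    ((continuousOn_phiCS β).stronglyMeasurableAtFilter isOpen_Ioi y hy)
    ((continuousOn_phiCS β).continuousAt (isOpen_Ioi.mem_nhds hy))

theorem hasDerivWithinAt_csEnergy {x v : ℕ → ℝ → F} {s : Set ℝ} {t : ℝ}
    (hx : ∀ i ∈ Icc 1 n, HasDerivWithinAt (x i) (v i t) s t)
    (hv : ∀ i ∈ Icc 1 n,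
      HasDerivWithinAt (v i) (csAccel n K M α β z (x · t) (v · t) i) s t) :
    HasDerivWithinAt (fun u => csEnergy n M β z (x · u) (v · u))
      (-DCS n K α (x · t) (v · t)) s t := by
  rw [← csEnergy_rate_eq_neg_DCS]
  refine .add (.const_mul _ (.fun_sum fun i hi => .fun_sum fun j hj =>
    ((hv i hi).sub (hv j hj)).norm_sq)) (.const_mul _ (.fun_sum fun i hi => ?_))
  have hi' : i - 1 ∈ Icc 1 n ∧ i ∈ Icc 1 n := by simp only [mem_Icc] at hi ⊢; omega
  have hlink := (((hx _ hi'.1).fun_sub (hx i hi'.2)).sub_const (z (i - 1))).norm_sq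
  exact (hasDerivAt_integral_phiCS β (neg_one_lt_zero.trans_le
    (sq_nonneg ‖x (i - 1) t - x i t - z (i - 1)‖))).comp_hasDerivWithinAt t hlink

theorem csEnergy_antitoneOn {x v : ℕ → ℝ → F} {S : Set ℝ} (hS : Convex ℝ S) (hK : 0 ≤ K)
    (hsol : IsCSSol n K M α β z x v S) :
    AntitoneOn (fun t => csEnergy n M β z (x · t) (v · t)) S := by
  have hderiv : ∀ t ∈ S, HasDerivWithinAt (fun u => csEnergy n M β z (x · u) (v · u))
      (-DCS n K α (x · t) (v · t)) S t := fun t ht =>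
    hasDerivWithinAt_csEnergy n K M α β z (fun i hi => (hsol i hi t ht).1)
      (fun i hi => (hsol i hi t ht).2)
  exact antitoneOn_of_hasDerivWithinAt_nonpos hS (fun t ht => (hderiv t ht).continuousWithinAt)
    (fun t ht => (hderiv t (interior_subset ht)).mono interior_subset)
    (fun t _ => neg_nonpos.2 (DCS_nonneg n K α _ _ hK))

end ControlledCuckerSmale

theorem cs_position_spread_linear_growth_general
    {d n : ℕ} (K M α β : ℝ) (hK : 0 ≤ K) (hM : 0 ≤ M)
    (z : ℕ → EuclideanSpace ℝ (Fin d)) (x v : ℕ → ℝ → EuclideanSpace ℝ (Fin d))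
    (T : ℝ)
    (hsol : IsCSSol n K M α β z x v (Set.Icc 0 T)) :
    ∀ t ∈ Set.Icc (0:ℝ) T,
      Real.sqrt (∑ i ∈ Finset.Icc 1 n, ∑ j ∈ Finset.Icc 1 n, ‖x i t - x j t‖ ^ 2)
        ≤ Real.sqrt (∑ i ∈ Finset.Icc 1 n, ∑ j ∈ Finset.Icc 1 n, ‖x i 0 - x j 0‖ ^ 2)
          + 2 * Real.sqrt
              (n * (VflCS n (fun i => v i 0) + E2CS n M β z (fun i => x i 0))) * t := by
  have henergy := csEnergy_antitoneOn n K M α β z (convex_Icc 0 T) hK hsol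
  have hspeed : ∀ u ∈ Set.Ico 0 T, √(∑ p ∈ Icc 1 n ×ˢ Icc 1 n, ‖v p.1 u - v p.2 u‖ ^ 2)
      ≤ 2 * √(n * csEnergy n M β z (x · 0) (v · 0)) := by
    intro u hu
    have hu' : u ∈ Set.Icc 0 T := Set.Ico_subset_Icc_self hu
    have hkin : VflCS n (v · u) ≤ csEnergy n M β z (x · 0) (v · 0) :=
      (le_add_of_nonneg_right (E2CS_nonneg n M β z _ hM)).trans
        (henergy ⟨le_rfl, hu.1.trans hu'.2⟩ hu' hu.1)
    rw [sum_product, sum_sum_norm_sub_sq_eq_four_mul_VflCS n (v · u),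
      show (2 : ℝ) = √(2 ^ 2) by simp, ← Real.sqrt_mul (by positivity)]
    refine Real.sqrt_le_sqrt ?_
    nlinarith [hkin]
  intro t ht
  simpa [sum_product, csEnergy] using sqrt_sum_norm_sq_le_add_mul (Icc 1 n ×ˢ Icc 1 n)
    (f := fun p u => x p.1 u - x p.2 u)
    (fun p hp u hu => (hsol _ (mem_product.1 hp).1 u hu).1.sub (hsol _ (mem_product.1 hp).2 u hu).1)
    hspeed t ht

/-- linear growth of the position spread:
`Γ(x(t)) ≤ Γ(x(0)) + 2√(nE₀) t` where `Γ(x) = √(∑_{i,j}|x_i - x_j|²)` and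
`E₀ = (1/(4n))∑_{i,j}|v_i(0) - v_j(0)|² + E₂(x(0))`. -/
theorem cs_position_spread_linear_growth
    {d n : ℕ} (hn : 2 ≤ n) (K M α β : ℝ) (hK : 0 ≤ K) (hM : 0 ≤ M)
    (hα : 0 < α) (hβ : 0 < β)
    (z : ℕ → EuclideanSpace ℝ (Fin d)) (x v : ℕ → ℝ → EuclideanSpace ℝ (Fin d))
    (T : ℝ) (hT : 0 < T)
    (hsol : IsCSSol n K M α β z x v (Set.Icc 0 T)) :
    ∀ t ∈ Set.Icc (0:ℝ) T,
      Real.sqrt (∑ i ∈ Finset.Icc 1 n, ∑ j ∈ Finset.Icc 1 n, ‖x i t - x j t‖ ^ 2)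
        ≤ Real.sqrt (∑ i ∈ Finset.Icc 1 n, ∑ j ∈ Finset.Icc 1 n, ‖x i 0 - x j 0‖ ^ 2)
          + 2 * Real.sqrt
              (n * (VflCS n (fun i => v i 0) + E2CS n M β z (fun i => x i 0))) * t :=
  cs_position_spread_linear_growth_general K M α β hK hM z x v T hsol
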